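/- If n ≥ 3 then χ'_g(P_n; m, 1) ≤ 3 for every positive integer m, where P_n is the path with n vertices; and for sufficiently large n, χ'_g(P_n; m, 1) = 3. -/

import Mathlib

namespace EdgeGame

variable {V : Type*}

/-- Two edges (as unordered pairs) are adjacent if they are distinct and share an endpoint. -/
def EAdj (e f : Sym2 V) : Prop := e ≠ f ∧ ∃ v, v ∈ e ∧ v ∈ f

/-- A proper (total) edge coloring with `k` colors. -/
def ProperColoring (G : SimpleGraph V) {k : ℕ} (c : Sym2 V → Fin k) : Prop :=
  ∀ e f, e ∈ G.edgeSet → f ∈ G.edgeSet → EAdj e f → c e ≠ c f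

/-- The chromatic index of `G`. -/
noncomputable def chromIndex (G : SimpleGraph V) : ℕ :=
  sInf {k | ∃ c : Sym2 V → Fin k, ProperColoring G c}

/-- A partial edge coloring is proper if adjacent colored edges receive distinct colors. -/
def Proper (G : SimpleGraph V) {k : ℕ} (c : Sym2 V → Option (Fin k)) : Prop :=
  ∀ e f, e ∈ G.edgeSet → f ∈ G.edgeSet → EAdj e f → ∀ a, c e = some a → c f ≠ some a

/-- `c'` extends the partial coloring `c` (no colored edge changes color). -/
def Extends {k : ℕ} (c c' : Sym2 V → Option (Fin k)) : Prop :=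
  ∀ e a, c e = some a → c' e = some a

/-- The number of uncolored edges of `G`. -/
noncomputable def uncolored (G : SimpleGraph V) {k : ℕ} (c : Sym2 V → Option (Fin k)) : ℕ :=
  {e | e ∈ G.edgeSet ∧ c e = none}.ncard

/-- `MakerWins G m k c b` : in the `(m,1)`-edge coloring game on `G` with `k` colors,
starting from the proper partial coloring `c`, with Maker to move iff `b = true`,
Maker has a winning strategy.  Maker colors `min m (number of uncolored edges)` edges
per turn, Breaker colors one edge per turn, all moves keep the coloring proper; Maker
wins when all edges are colored, and loses when the player to move has no legal move. -/
inductive MakerWins (G : SimpleGraph V) (m k : ℕ) :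
    (Sym2 V → Option (Fin k)) → Bool → Prop
  | all (c : Sym2 V → Option (Fin k)) (b : Bool)
      (h : ∀ e ∈ G.edgeSet, c e ≠ none) : MakerWins G m k c b
  | maker (c c' : Sym2 V → Option (Fin k)) (hne : uncolored G c ≠ 0)
      (hext : Extends c c') (hprop : Proper G c')
      (hcount : uncolored G c' = uncolored G c - min m (uncolored G c))
      (hnext : MakerWins G m k c' false) : MakerWins G m k c true
  | breaker (c : Sym2 V → Option (Fin k)) (hne : uncolored G c ≠ 0)
      (hcan : ∃ c', Extends c c' ∧ Proper G c' ∧ uncolored G c' + 1 = uncolored G c)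
      (h : ∀ c', Extends c c' → Proper G c' → uncolored G c' + 1 = uncolored G c →
        MakerWins G m k c' true) : MakerWins G m k c false

/-- The `(m,1)`-game chromatic index of `G`: the least number of colors with which
Maker has a winning strategy in the `(m,1)`-edge coloring game. -/
noncomputable def gameChromIndex (G : SimpleGraph V) (m : ℕ) : ℕ :=
  sInf {k | MakerWins G m k (fun _ => none) true}

/-- The wheel `W n`: a hub `none` joined to every vertex of the cycle on `Fin n`. -/
def wheel (n : ℕ) : SimpleGraph (Option (ZMod n)) :=
  SimpleGraph.fromRel (fun a b => a = none ∨ ∃ i : ZMod n, a = some i ∧ b = some (i + 1))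

/-- The `i`-th spoke of the wheel. -/
def spoke (n : ℕ) (i : ZMod n) : Sym2 (Option (ZMod n)) := s(none, some i)

/-- The `i`-th rim edge of the wheel. -/
def rim (n : ℕ) (i : ZMod n) : Sym2 (Option (ZMod n)) := s(some i, some (i + 1))

/-- A caterpillar: a tree together with a path (the spine) whose support consists
exactly of the vertices of degree at least two. -/
def IsCaterpillar (G : SimpleGraph V) [Fintype V] [DecidableRel G.Adj] : Prop :=
  G.IsTree ∧ ∃ (u v : V) (p : G.Walk u v), p.IsPath ∧
    ∀ w : V, w ∈ p.support ↔ 2 ≤ G.degree w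

end EdgeGame

open EdgeGame SimpleGraph

section PathAux
open EdgeGame SimpleGraph

variable {n : ℕ}

/-- The `i`-th edge of the path, clamped. -/
def pe (hn : 2 ≤ n) (i : ℕ) : Sym2 (Fin n) :=
  s(⟨min i (n-2), by omega⟩, ⟨min i (n-2) + 1, by omega⟩)

lemma pe_mem (hn : 2 ≤ n) (i : ℕ) : pe hn i ∈ (pathGraph n).edgeSet := by
  simp [pe, SimpleGraph.mem_edgeSet, pathGraph_adj]

lemma pe_val (hn : 2 ≤ n) {i : ℕ} (hi : i ≤ n - 2) :
    pe hn i = s(⟨i, by omega⟩, ⟨i+1, by omega⟩) := by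
  simp [pe, min_eq_left hi]

lemma pe_clamp (hn : 2 ≤ n) {i : ℕ} (hi : n - 2 ≤ i) : pe hn i = pe hn (n-2) := by
  simp [pe, min_eq_right hi]

lemma edge_eq (hn : 2 ≤ n) {e : Sym2 (Fin n)} (he : e ∈ (pathGraph n).edgeSet) :
    ∃ i ≤ n - 2, e = pe hn i := by
  induction e using Sym2.inductionOn with
  | hf u v =>
    rw [SimpleGraph.mem_edgeSet, pathGraph_adj] at he
    rcases he with h | h
    · refine ⟨u.val, by omega, ?_⟩
      rw [pe_val hn (by omega : (u:ℕ) ≤ n - 2)]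
      congr 1
      simp [Prod.ext_iff, Fin.ext_iff, h.symm]
    · refine ⟨v.val, by omega, ?_⟩
      rw [pe_val hn (by omega : (v:ℕ) ≤ n - 2), Sym2.eq_swap]
      congr 1
      simp [Prod.ext_iff, Fin.ext_iff, h.symm]

lemma pe_inj (hn : 2 ≤ n) {i j : ℕ} (hi : i ≤ n-2) (hj : j ≤ n-2)
    (h : pe hn i = pe hn j) : i = j := by
  rw [pe_val hn hi, pe_val hn hj, Sym2.eq_iff] at h
  rcases h with ⟨h1, _⟩ | ⟨h1, h2⟩ <;>
    simp only [Fin.mk.injEq] at * <;> omega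

end PathAux
section PathAux2
open EdgeGame SimpleGraph

variable {n : ℕ}

lemma eadj_symm {V : Type*} {e f : Sym2 V} (h : EAdj e f) : EAdj f e :=
  ⟨h.1.symm, h.2.imp fun v hv => ⟨hv.2, hv.1⟩⟩

lemma pe_eadj (hn : 2 ≤ n) {i : ℕ} (hi : i + 1 ≤ n - 2) :
    EAdj (pe hn i) (pe hn (i+1)) := by
  constructor
  · intro h; exact absurd (pe_inj hn (by omega) hi h) (by omega)
  · refine ⟨⟨i+1, by omega⟩, ?_, ?_⟩
    · rw [pe_val hn (by omega : i ≤ n - 2)]; simp [Sym2.mem_iff]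
    · rw [pe_val hn hi]; simp [Sym2.mem_iff]

lemma adj_classify (hn : 2 ≤ n) {i : ℕ} (hi : i ≤ n - 2) {f : Sym2 (Fin n)}
    (hf : f ∈ (pathGraph n).edgeSet) (ha : EAdj (pe hn i) f) :
    f = pe hn (i-1) ∨ f = pe hn (i+1) := by
  obtain ⟨j, hj, rfl⟩ := edge_eq hn hf
  obtain ⟨hne, v, hv1, hv2⟩ := ha
  rw [pe_val hn hi] at hv1
  rw [pe_val hn hj] at hv2
  rw [Sym2.mem_iff] at hv1 hv2
  have hij : i ≠ j := fun h => hne (by rw [h])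
  have h1 : v.val = i ∨ v.val = i + 1 := by
    rcases hv1 with h | h <;> [left; right] <;> rw [h]
  have h2 : v.val = j ∨ v.val = j + 1 := by
    rcases hv2 with h | h <;> [left; right] <;> rw [h]
  have : j = i - 1 ∨ j = i + 1 := by omega
  rcases this with h | h
  · left; rw [h]
  · right; rw [h]

end PathAux2
section Greedy
open EdgeGame SimpleGraph

variable {n : ℕ}

lemma extends_trans {V : Type*} {k : ℕ} {c c' c'' : Sym2 V → Option (Fin k)}
    (h1 : Extends c c') (h2 : Extends c' c'') : Extends c c'' :=
  fun e a ha => h2 e a (h1 e a ha)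

lemma extends_refl {V : Type*} {k : ℕ} (c : Sym2 V → Option (Fin k)) : Extends c c :=
  fun _ _ h => h

/-- updating an uncolored edge with a color avoided by its neighbours -/
lemma update_ok {k : ℕ} {G : SimpleGraph (Fin n)} {c : Sym2 (Fin n) → Option (Fin k)}
    (hc : Proper G c) {e : Sym2 (Fin n)} (he : e ∈ G.edgeSet) (hnone : c e = none)
    {a : Fin k} (hav : ∀ f ∈ G.edgeSet, EAdj e f → c f ≠ some a) :
    ∃ c', Extends c c' ∧ Proper G c' ∧ uncolored G c' + 1 = uncolored G c ∧
      c' e = some a ∧ ∀ f, f ≠ e → c' f = c f := by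
  classical
  refine ⟨fun g => if g = e then some a else c g, ?_, ?_, ?_, by simp, fun f hf => by simp [hf]⟩
  · intro g b hg
    by_cases hge : g = e
    · rw [hge] at hg; rw [hnone] at hg; exact absurd hg (by simp)
    · simp [hge, hg]
  · intro e' f' he' hf' hadj b hb hfb
    by_cases h1 : e' = e
    · rw [h1] at hb hadj
      simp only [if_pos rfl] at hb
      have hb' : b = a := (Option.some_inj.mp hb).symm
      have h2 : f' ≠ e := fun hh => hadj.1 hh.symm
      simp only [if_neg h2] at hfb
      exact hav f' hf' hadj (hb' ▸ hfb)
    · simp only [if_neg h1] at hb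
      by_cases h2 : f' = e
      · rw [h2] at hfb hadj
        simp only [if_pos rfl] at hfb
        have hb' : b = a := (Option.some_inj.mp hfb).symm
        exact hav e' he' (eadj_symm hadj) (hb' ▸ hb)
      · simp only [if_neg h2] at hfb
        exact hc e' f' he' hf' hadj b hb hfb
  · have hset : {g | g ∈ G.edgeSet ∧ (if g = e then some a else c g) = none}
        = {g | g ∈ G.edgeSet ∧ c g = none} \ {e} := by
      ext g
      by_cases hg : g = e <;> simp [hg, hnone]
    rw [uncolored, uncolored, hset]
    exact Set.ncard_diff_singleton_add_one ⟨he, hnone⟩ (Set.toFinite _)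

lemma greedy_step (hn : 2 ≤ n) {c : Sym2 (Fin n) → Option (Fin 3)}
    (hc : Proper (pathGraph n) c) (hne : uncolored (pathGraph n) c ≠ 0) :
    ∃ c', Extends c c' ∧ Proper (pathGraph n) c' ∧
      uncolored (pathGraph n) c' + 1 = uncolored (pathGraph n) c := by
  obtain ⟨e, he, hnone⟩ := Set.nonempty_of_ncard_ne_zero hne
  obtain ⟨i, hi, rfl⟩ := edge_eq hn he
  obtain ⟨a, ha1, ha2⟩ : ∃ a : Fin 3, some a ≠ c (pe hn (i-1)) ∧ some a ≠ c (pe hn (i+1)) := by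
    rcases (c (pe hn (i-1))) with _ | x <;> rcases (c (pe hn (i+1))) with _ | y
    · exact ⟨0, by simp, by simp⟩
    · exact ⟨if y = 0 then 1 else 0, by simp, by rcases y with ⟨y, hy⟩; interval_cases y <;> simp⟩
    · exact ⟨if x = 0 then 1 else 0, by rcases x with ⟨x, hx⟩; interval_cases x <;> simp, by simp⟩
    · have : ∃ a : Fin 3, a ≠ x ∧ a ≠ y := by
        revert x y; decide
      obtain ⟨a, h1, h2⟩ := this
      exact ⟨a, by simp [h1], by simp [h2]⟩
  have hav : ∀ f ∈ (pathGraph n).edgeSet, EAdj (pe hn i) f → c f ≠ some a := by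
    intro f hf hadj
    rcases adj_classify hn hi hf hadj with h | h <;> rw [h]
    · exact fun hh => ha1 hh.symm
    · exact fun hh => ha2 hh.symm
  obtain ⟨c', h1, h2, h3, _⟩ := update_ok hc he hnone hav
  exact ⟨c', h1, h2, h3⟩

lemma greedy_steps (hn : 2 ≤ n) {c : Sym2 (Fin n) → Option (Fin 3)}
    (hc : Proper (pathGraph n) c) (t : ℕ) (ht : t ≤ uncolored (pathGraph n) c) :
    ∃ c', Extends c c' ∧ Proper (pathGraph n) c' ∧
      uncolored (pathGraph n) c' = uncolored (pathGraph n) c - t := by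
  induction t generalizing c with
  | zero => exact ⟨c, extends_refl c, hc, rfl⟩
  | succ t ih =>
    obtain ⟨c', h1, h2, h3⟩ := greedy_step hn hc (by omega)
    obtain ⟨c'', g1, g2, g3⟩ := ih h2 (by omega)
    exact ⟨c'', extends_trans h1 g1, g2, by omega⟩

lemma maker_wins3 (hn : 2 ≤ n) {m : ℕ} (hm : 1 ≤ m) :
    ∀ u (c : Sym2 (Fin n) → Option (Fin 3)), uncolored (pathGraph n) c = u →
      Proper (pathGraph n) c → ∀ b, MakerWins (pathGraph n) m 3 c b := by
  intro u
  induction u using Nat.strong_induction_on with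
  | _ u ih =>
    intro c hu hc b
    rcases Nat.eq_zero_or_pos u with h0 | hpos
    · refine MakerWins.all c b ?_
      intro e he hnone
      have hmem : e ∈ {e | e ∈ (pathGraph n).edgeSet ∧ c e = none} := ⟨he, hnone⟩
      rw [Set.ncard_eq_zero (Set.toFinite _) |>.mp (hu.trans h0)] at hmem
      simp at hmem
    · cases b
      · -- breaker to move
        refine MakerWins.breaker c (by omega) ?_ ?_
        · exact greedy_step hn hc (by omega)
        · intro c' hext hprop hcnt
          exact ih (uncolored (pathGraph n) c') (by omega) c' rfl hprop true
      · -- maker to move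
        obtain ⟨c', h1, h2, h3⟩ := greedy_steps hn hc (min m u) (by rw [hu]; omega)
        refine MakerWins.maker c c' (by omega) h1 h2 (by rw [h3, hu]) ?_
        exact ih (uncolored (pathGraph n) c') (by rw [h3, hu]; omega) c' rfl h2 false

end Greedy
section Dead
open EdgeGame SimpleGraph

/-- A position with a permanently-uncolorable edge. -/
def Dead {V : Type*} (G : SimpleGraph V) {k : ℕ} (c : Sym2 V → Option (Fin k)) : Prop :=
  ∃ e ∈ G.edgeSet, c e = none ∧ ∀ c', Extends c c' → Proper G c' → c' e = none

lemma dead_not_win {V : Type*} {G : SimpleGraph V} {m k : ℕ}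
    {c : Sym2 V → Option (Fin k)} {b : Bool}
    (hw : MakerWins G m k c b) : ¬ Dead G c := by
  induction hw with
  | all c b h =>
    rintro ⟨e, he, hnone, _⟩
    exact h e he hnone
  | maker c c' hne hext hprop hcount hnext ih =>
    rintro ⟨e, he, hnone, hall⟩
    exact ih ⟨e, he, hall c' hext hprop,
      fun c'' h1 h2 => hall c'' (extends_trans hext h1) h2⟩
  | breaker c hne hcan h ih =>
    rintro ⟨e, he, hnone, hall⟩
    obtain ⟨c', h1, h2, h3⟩ := hcan
    exact ih c' h1 h2 h3 ⟨e, he, hall c' h1 h2,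
      fun c'' g1 g2 => hall c'' (extends_trans h1 g1) g2⟩

end Dead
section Count
open EdgeGame SimpleGraph Finset

variable {n : ℕ}

lemma uncolored_eq_filter (hn : 2 ≤ n) {k : ℕ} (c : Sym2 (Fin n) → Option (Fin k)) :
    uncolored (pathGraph n) c =
      ((Finset.range (n-1)).filter (fun i => c (pe hn i) = none)).card := by
  classical
  have hset : {e | e ∈ (pathGraph n).edgeSet ∧ c e = none}
      = ↑(((Finset.range (n-1)).filter (fun i => c (pe hn i) = none)).image (pe hn)) := by
    ext e
    simp only [Set.mem_setOf_eq, Finset.coe_image, Set.mem_image, Finset.mem_coe,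
      Finset.mem_filter, Finset.mem_range]
    constructor
    · rintro ⟨he, hnone⟩
      obtain ⟨i, hi, rfl⟩ := edge_eq hn he
      exact ⟨i, ⟨by omega, hnone⟩, rfl⟩
    · rintro ⟨i, ⟨hi, hnone⟩, rfl⟩
      exact ⟨pe_mem hn i, hnone⟩
  rw [uncolored, hset, Set.ncard_coe_finset]
  apply Finset.card_image_of_injOn
  intro i hi j hj hij
  simp only [Finset.coe_filter, Set.mem_setOf_eq, Finset.mem_range] at hi hj
  exact pe_inj hn (by omega) (by omega) hij

lemma uncolored_init (hn : 2 ≤ n) {k : ℕ} :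
    uncolored (pathGraph n) (fun _ => (none : Option (Fin k))) = n - 1 := by
  rw [uncolored_eq_filter hn]
  simp

/-- chain lemma for the combinatorial argument -/
lemma chain_lemma {L : ℕ} (S : Finset ℕ) (hS : ∀ i ∈ S, i < L)
    (hstep : ∀ i ∈ S, i + 2 < L → i+1 ∈ S ∨ i+2 ∈ S ∨ i+3 ∈ S) :
    ∀ d j, j ∈ S → L - j ≤ d → L ≤ j + 3 + 3 * (S.filter (fun x => j < x)).card := by
  intro d
  induction d with
  | zero => intro j hj hd; have := hS j hj; omega
  | succ d ih =>
    intro j hj hd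
    by_cases hj2 : j + 2 < L
    · obtain ⟨j', hj', hlt, hle⟩ : ∃ j', j' ∈ S ∧ j < j' ∧ j' ≤ j + 3 := by
        rcases hstep j hj hj2 with h | h | h
        exacts [⟨j+1, h, by omega, by omega⟩, ⟨j+2, h, by omega, by omega⟩,
          ⟨j+3, h, by omega, by omega⟩]
      have hrec := ih j' hj' (by have := hS j' hj'; omega)
      have hsub : insert j' (S.filter (fun x => j' < x)) ⊆ S.filter (fun x => j < x) := by
        intro x hx
        rcases Finset.mem_insert.mp hx with rfl | hx
        · exact Finset.mem_filter.mpr ⟨hj', hlt⟩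
        · have := Finset.mem_filter.mp hx
          exact Finset.mem_filter.mpr ⟨this.1, by omega⟩
      have hcard := Finset.card_le_card hsub
      rw [Finset.card_insert_of_notMem (by simp)] at hcard
      omega
    · omega

lemma combi {L m : ℕ} (S : Finset ℕ) (hS : ∀ i ∈ S, i < L) (hcard : S.card ≤ m)
    (hne : S.Nonempty) (hL : 3*m + 7 ≤ L) :
    ∃ i ∈ S, (i + 2 < L ∧ i+1 ∉ S ∧ i+2 ∉ S ∧ i+3 ∉ S) ∨
      (2 ≤ i ∧ i-1 ∉ S ∧ i-2 ∉ S ∧ i-3 ∉ S) := by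
  classical
  by_contra hcon
  push_neg at hcon
  have hstep : ∀ i ∈ S, i + 2 < L → i+1 ∈ S ∨ i+2 ∈ S ∨ i+3 ∈ S := by
    intro i hi h2
    by_cases h1 : i+1 ∈ S
    · exact Or.inl h1
    by_cases h2' : i+2 ∈ S
    · exact Or.inr (Or.inl h2')
    exact Or.inr (Or.inr ((hcon i hi).1 h2 h1 h2'))
  set A := S.filter (fun x => 2 ≤ x) with hA
  by_cases hAe : A.Nonempty
  · set j0 := A.min' hAe with hj0
    have hj0A : j0 ∈ A := Finset.min'_mem A hAe
    have hj0S : j0 ∈ S := (Finset.mem_filter.mp hj0A).1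
    have hj02 : 2 ≤ j0 := (Finset.mem_filter.mp hj0A).2
    -- left condition fails at j0
    have hleft := (hcon j0 hj0S).2
    have hx : ∃ x ∈ S, j0 - 3 ≤ x ∧ x < j0 := by
      by_cases h1 : j0 - 1 ∈ S
      · exact ⟨j0 - 1, h1, by omega, by omega⟩
      by_cases h2 : j0 - 2 ∈ S
      · exact ⟨j0 - 2, h2, by omega, by omega⟩
      exact ⟨j0 - 3, hleft hj02 h1 h2, by omega, by omega⟩
    obtain ⟨x, hxS, hx1, hx2⟩ := hx
    have hxlt : x < 2 := by
      by_contra hge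
      have hxA : x ∈ A := Finset.mem_filter.mpr ⟨hxS, by omega⟩
      have := Finset.min'_le A x hxA
      omega
    have hj04 : j0 ≤ 4 := by omega
    have hchain := chain_lemma S hS hstep L j0 hj0S (by omega)
    have hfil : (S.filter (fun x => j0 < x)).card + 1 ≤ m := by
      have hsub : insert j0 (S.filter (fun x => j0 < x)) ⊆ S := by
        intro y hy
        rcases Finset.mem_insert.mp hy with rfl | hy
        · exact hj0S
        · exact (Finset.mem_filter.mp hy).1
      have := Finset.card_le_card hsub
      rw [Finset.card_insert_of_notMem (by simp)] at this
      omega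
    omega
  · -- S ⊆ {0,1}
    have hsmall : ∀ i ∈ S, i < 2 := by
      intro i hi
      by_contra hge
      exact hAe ⟨i, Finset.mem_filter.mpr ⟨hi, by omega⟩⟩
    set i := S.max' hne with hidef
    have hi : i ∈ S := S.max'_mem hne
    have hi2 := hsmall i hi
    have h3 := (hcon i hi).1 (by omega)
      (fun hmem => by have := S.le_max' _ hmem; omega)
      (fun hmem => by have := S.le_max' _ hmem; omega)
    have := S.le_max' _ h3
    omega

end Count
section LowerHelpers
open EdgeGame SimpleGraph

variable {n : ℕ}

lemma fin2_cases : ∀ (x a b : Fin 2), b ≠ a → x = a ∨ x = b := by decide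

lemma fin2_other : ∀ a : Fin 2, ∃ b : Fin 2, b ≠ a := by decide

/-- If edge `p` is colored and `p+1`, `p+2` (and `p+3` if it exists) are uncolored,
Breaker kills Maker by coloring `p+2` with the color opposite to that of `p`. -/
lemma helper_left {m : ℕ} (hn : 2 ≤ n) {c' : Sym2 (Fin n) → Option (Fin 2)}
    (hprop : Proper (pathGraph n) c') {p : ℕ} (hp : p + 2 ≤ n - 2) {a : Fin 2}
    (ha : c' (pe hn p) = some a) (h1 : c' (pe hn (p+1)) = none)
    (h2 : c' (pe hn (p+2)) = none) (h3 : p + 3 ≤ n - 2 → c' (pe hn (p+3)) = none) :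
    ¬ MakerWins (pathGraph n) m 2 c' false := by
  obtain ⟨b, hba⟩ := fin2_other a
  have hav : ∀ f ∈ (pathGraph n).edgeSet, EAdj (pe hn (p+2)) f → c' f ≠ some b := by
    intro f hf hadj
    rcases adj_classify hn hp hf hadj with hc | hc
    · rw [show p + 2 - 1 = p + 1 from rfl] at hc
      rw [hc, h1]; simp
    · by_cases hq : p + 3 ≤ n - 2
      · rw [hc, h3 hq]; simp
      · exfalso
        apply hadj.1
        rw [hc, pe_clamp hn (by omega : n - 2 ≤ p + 3)]
        congr 1
        omega
  obtain ⟨c'', hext2, hprop2, hcnt2, hval, hother⟩ :=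
    update_ok hprop (pe_mem hn (p+2)) h2 hav
  have hne12 : pe hn (p+1) ≠ pe hn (p+2) := fun h =>
    absurd (pe_inj hn (by omega) hp h) (by omega)
  have hne02 : pe hn p ≠ pe hn (p+2) := fun h =>
    absurd (pe_inj hn (by omega) hp h) (by omega)
  have hdead : Dead (pathGraph n) c'' := by
    refine ⟨pe hn (p+1), pe_mem hn (p+1), by rw [hother _ hne12]; exact h1, ?_⟩
    intro c₃ hext3 hprop3
    by_contra hx0
    obtain ⟨x, hx⟩ := Option.ne_none_iff_exists'.mp hx0
    have hxa : c₃ (pe hn p) = some a := hext3 _ _ (by rw [hother _ hne02]; exact ha)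
    have hxb : c₃ (pe hn (p+2)) = some b := hext3 _ _ hval
    rcases fin2_cases x a b hba with rfl | rfl
    · exact hprop3 (pe hn p) (pe hn (p+1)) (pe_mem hn p) (pe_mem hn (p+1))
        (pe_eadj hn (by omega)) x hxa hx
    · exact hprop3 (pe hn (p+2)) (pe hn (p+1)) (pe_mem hn (p+2)) (pe_mem hn (p+1))
        (eadj_symm (pe_eadj hn (by omega : (p+1) + 1 ≤ n - 2))) x hxb hx
  intro hw
  cases hw with
  | all _ _ h => exact h (pe hn (p+1)) (pe_mem hn (p+1)) h1
  | breaker _ _ hcan h => exact dead_not_win (h c'' hext2 hprop2 hcnt2) hdead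

/-- Mirror image: edge `p+2` is colored, `p`, `p+1` (and `p-1` if it exists) uncolored;
Breaker colors `p` with the opposite color. -/
lemma helper_right {m : ℕ} (hn : 2 ≤ n) {c' : Sym2 (Fin n) → Option (Fin 2)}
    (hprop : Proper (pathGraph n) c') {p : ℕ} (hp : p + 2 ≤ n - 2) {a : Fin 2}
    (ha : c' (pe hn (p+2)) = some a) (h1 : c' (pe hn (p+1)) = none)
    (h0 : c' (pe hn p) = none) (hm1 : 1 ≤ p → c' (pe hn (p-1)) = none) :
    ¬ MakerWins (pathGraph n) m 2 c' false := by
  obtain ⟨b, hba⟩ := fin2_other a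
  have hav : ∀ f ∈ (pathGraph n).edgeSet, EAdj (pe hn p) f → c' f ≠ some b := by
    intro f hf hadj
    rcases adj_classify hn (by omega : p ≤ n - 2) hf hadj with hc | hc
    · by_cases hq : 1 ≤ p
      · rw [hc, hm1 hq]; simp
      · exfalso
        apply hadj.1
        rw [hc]
        congr 1
        omega
    · rw [hc, h1]; simp
  obtain ⟨c'', hext2, hprop2, hcnt2, hval, hother⟩ :=
    update_ok hprop (pe_mem hn p) h0 hav
  have hne10 : pe hn (p+1) ≠ pe hn p := fun h =>
    absurd (pe_inj hn (by omega) (by omega) h) (by omega)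
  have hne20 : pe hn (p+2) ≠ pe hn p := fun h =>
    absurd (pe_inj hn hp (by omega) h) (by omega)
  have hdead : Dead (pathGraph n) c'' := by
    refine ⟨pe hn (p+1), pe_mem hn (p+1), by rw [hother _ hne10]; exact h1, ?_⟩
    intro c₃ hext3 hprop3
    by_contra hx0
    obtain ⟨x, hx⟩ := Option.ne_none_iff_exists'.mp hx0
    have hxa : c₃ (pe hn (p+2)) = some a := hext3 _ _ (by rw [hother _ hne20]; exact ha)
    have hxb : c₃ (pe hn p) = some b := hext3 _ _ hval
    rcases fin2_cases x a b hba with rfl | rfl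
    · exact hprop3 (pe hn (p+2)) (pe hn (p+1)) (pe_mem hn (p+2)) (pe_mem hn (p+1))
        (eadj_symm (pe_eadj hn (by omega : (p+1) + 1 ≤ n - 2))) x hxa hx
    · exact hprop3 (pe hn p) (pe hn (p+1)) (pe_mem hn p) (pe_mem hn (p+1))
        (pe_eadj hn (by omega)) x hxb hx
  intro hw
  cases hw with
  | all _ _ h => exact h (pe hn (p+1)) (pe_mem hn (p+1)) h1
  | breaker _ _ hcan h => exact dead_not_win (h c'' hext2 hprop2 hcnt2) hdead

end LowerHelpers
section Lower
open EdgeGame SimpleGraph Finset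

variable {n : ℕ}

lemma proper_init {k : ℕ} (G : SimpleGraph (Fin n)) :
    Proper G (fun _ => (none : Option (Fin k))) :=
  fun _ _ _ _ _ _ h => absurd h (by simp)

lemma exists_colored (hn : 2 ≤ n) {k : ℕ} {c' : Sym2 (Fin n) → Option (Fin k)}
    (h : uncolored (pathGraph n) c' < n - 1) : ∃ i, i < n-1 ∧ c' (pe hn i) ≠ none := by
  classical
  by_contra hno
  push_neg at hno
  rw [uncolored_eq_filter hn] at h
  rw [Finset.filter_eq_self.mpr (fun i hi => hno i (Finset.mem_range.mp hi)),
    Finset.card_range] at h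
  omega

lemma not_win0 {m : ℕ} (hm : 1 ≤ m) (hn : 2 ≤ n) :
    ¬ MakerWins (pathGraph n) m 0 (fun _ => none) true := by
  intro hw
  cases hw with
  | all _ _ h => exact h (pe hn 0) (pe_mem hn 0) rfl
  | maker _ c' hne hext hprop hcount hnext =>
    have hcc : c' = (fun _ => (none : Option (Fin 0))) := by
      funext e
      cases he : c' e with
      | none => rfl
      | some a => exact a.elim0
    rw [hcc, uncolored_init hn] at hcount
    omega

lemma not_win1 {m : ℕ} (hm : 1 ≤ m) (hn3 : 3*m + 8 ≤ n) :
    ¬ MakerWins (pathGraph n) m 1 (fun _ => none) true := by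
  have hn : 2 ≤ n := by omega
  intro hw
  cases hw with
  | all _ _ h => exact h (pe hn 0) (pe_mem hn 0) rfl
  | maker _ c' hne hext hprop hcount hnext =>
    rw [uncolored_init hn] at hcount
    obtain ⟨i, hiL, hine⟩ := exists_colored hn (by rw [hcount]; omega)
    obtain ⟨a, ha⟩ := Option.ne_none_iff_exists'.mp hine
    -- the dead neighbour
    obtain ⟨j, hj, hadj⟩ : ∃ j, j ≤ n - 2 ∧ EAdj (pe hn j) (pe hn i) := by
      rcases Nat.eq_zero_or_pos i with rfl | hi1
      · exact ⟨1, by omega, eadj_symm (pe_eadj hn (by omega))⟩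
      · refine ⟨i - 1, by omega, ?_⟩
        have := pe_eadj hn (by omega : (i-1) + 1 ≤ n - 2)
        rwa [show i - 1 + 1 = i by omega] at this
    have huncol : ∀ (c₃ : Sym2 (Fin n) → Option (Fin 1)), Proper (pathGraph n) c₃ →
        c₃ (pe hn i) = some a → c₃ (pe hn j) = none := by
      intro c₃ hprop3 ha3
      by_contra hx0
      obtain ⟨x, hx⟩ := Option.ne_none_iff_exists'.mp hx0
      have hxa : x = a := Subsingleton.elim x a
      exact hprop3 (pe hn i) (pe hn j) (pe_mem hn i) (pe_mem hn j)
        (eadj_symm hadj) a ha3 (hxa ▸ hx)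
    have hdead : Dead (pathGraph n) c' :=
      ⟨pe hn j, pe_mem hn j, huncol c' hprop ha,
        fun c₃ hext3 hprop3 => huncol c₃ hprop3 (hext3 _ _ ha)⟩
    exact dead_not_win hnext hdead

lemma not_win2 {m : ℕ} (hm : 1 ≤ m) (hn3 : 3*m + 8 ≤ n) :
    ¬ MakerWins (pathGraph n) m 2 (fun _ => none) true := by
  have hn : 2 ≤ n := by omega
  intro hw
  cases hw with
  | all _ _ h => exact h (pe hn 0) (pe_mem hn 0) rfl
  | maker _ c' hne hext hprop hcount hnext =>
    classical
    rw [uncolored_init hn, show min m (n-1) = m by omega] at hcount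
    set S := (Finset.range (n-1)).filter (fun i => ¬ (c' (pe hn i) = none)) with hSdef
    have hcards := Finset.card_filter_add_card_filter_not
      (s := Finset.range (n-1)) (p := fun i => c' (pe hn i) = none)
    rw [← uncolored_eq_filter hn, Finset.card_range, hcount] at hcards
    have hScard : S.card = m := by rw [hSdef]; omega
    have hSmem : ∀ i ∈ S, i < n - 1 := by
      intro i hi
      exact Finset.mem_range.mp (Finset.mem_filter.mp hi).1
    have notS : ∀ j, j < n - 1 → j ∉ S → c' (pe hn j) = none := by
      intro j hj hjS
      by_contra hne'
      exact hjS (Finset.mem_filter.mpr ⟨Finset.mem_range.mpr hj, hne'⟩)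
    obtain ⟨i, hiS, hcase⟩ := combi S hSmem (le_of_eq hScard)
      (Finset.card_pos.mp (by omega)) (by omega : 3*m + 7 ≤ n - 1)
    have hiL : i < n - 1 := hSmem i hiS
    have hine : c' (pe hn i) ≠ none := (Finset.mem_filter.mp hiS).2
    obtain ⟨a, ha⟩ := Option.ne_none_iff_exists'.mp hine
    rcases hcase with ⟨h2, hs1, hs2, hs3⟩ | ⟨hi2, hs1, hs2, hs3⟩
    · exact helper_left hn hprop (by omega : i + 2 ≤ n - 2) ha
        (notS _ (by omega) hs1) (notS _ (by omega) hs2)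
        (fun hq => notS _ (by omega) hs3) hnext
    · have ha' : c' (pe hn ((i-2)+2)) = some a := by
        rw [show i - 2 + 2 = i by omega]; exact ha
      refine helper_right hn hprop (by omega : (i-2) + 2 ≤ n - 2) ha' ?_ ?_ ?_ hnext
      · rw [show i - 2 + 1 = i - 1 by omega]; exact notS _ (by omega) hs1
      · exact notS _ (by omega) hs2
      · intro hq
        rw [show i - 2 - 1 = i - 3 by omega]
        exact notS _ (by omega) hs3

end Lower

theorem stmt13' :
    (∀ n : ℕ, 3 ≤ n → ∀ m : ℕ, 1 ≤ m →
      gameChromIndex (SimpleGraph.pathGraph n) m ≤ 3) ∧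
    (∀ m : ℕ, 1 ≤ m → ∃ N : ℕ, ∀ n : ℕ, N ≤ n →
      gameChromIndex (SimpleGraph.pathGraph n) m = 3) := by
  constructor
  · intro n hn3 m hm
    have hn : 2 ≤ n := by omega
    exact Nat.sInf_le (maker_wins3 hn hm _ (fun _ => none) rfl (proper_init _) true)
  · intro m hm
    refine ⟨3*m + 8, fun n hn3 => ?_⟩
    have hn : 2 ≤ n := by omega
    have h3 : MakerWins (pathGraph n) m 3 (fun _ => none) true :=
      maker_wins3 hn hm _ (fun _ => none) rfl (proper_init _) true
    refine le_antisymm (Nat.sInf_le h3) ?_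
    refine le_csInf ⟨3, h3⟩ ?_
    intro k hk
    by_contra hlt
    push_neg at hlt
    interval_cases k
    · exact not_win0 hm hn hk
    · exact not_win1 hm hn3 hk
    · exact not_win2 hm hn3 hk

/-- χ'_g(P_n;m,1) ≤ 3 for n ≥ 3 and every positive m; and for every
positive m, χ'_g(P_n;m,1) = 3 for all sufficiently large n. -/
theorem stmt13 :
    (∀ n : ℕ, 3 ≤ n → ∀ m : ℕ, 1 ≤ m →
      gameChromIndex (SimpleGraph.pathGraph n) m ≤ 3) ∧
    (∀ m : ℕ, 1 ≤ m → ∃ N : ℕ, ∀ n : ℕ, N ≤ n →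
      gameChromIndex (SimpleGraph.pathGraph n) m = 3) := by
  exact stmt13'
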